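/- arXiv:1910.04308 — 2 statements merged into one kernel-verified Lean document; each statement's English description precedes it below -/
import Mathlib

section
/- Let (X, ω_X, μ_X) and (Y, ω_Y, μ_Y) be finite measure networks and μ an optimal coupling achieving the Gromov–Wasserstein distance d(X,Y) = (1/2) dis(μ), where dis(μ)² = ∑_{x,x',y,y'} |ω_X(x,x') − ω_Y(y,y')|² μ(x,y) μ(x',y'). For t ∈ [0,1], define γ(t) = (X × Y, Ω_t, μ) with Ω_t((x,y),(x',y')) = (1−t) ω_X(x,x') + t ω_Y(y,y'). Then for all s, t ∈ [0,1], the Gromov–Wasserstein distance satisfies d(γ(s), γ(t)) = |t − s| · d(X, Y); that is, γ is a geodesic from X to Y in the GW metric. -/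
open Finset

/-- A coupling of the probability vectors `μX` and `μY`: nonnegative entries with
marginals `μX` and `μY`. -/
def IsCoupling {α β : Type*} [Fintype α] [Fintype β]
    (μX : α → ℝ) (μY : β → ℝ) (C : α → β → ℝ) : Prop :=
  (∀ x y, 0 ≤ C x y) ∧ (∀ x, ∑ y, C x y = μX x) ∧ (∀ y, ∑ x, C x y = μY y)

/-- The squared distortion of a coupling `C` between the weight functions `ωX` and `ωY`. -/
def disSq {α β : Type*} [Fintype α] [Fintype β]
    (ωX : α → α → ℝ) (ωY : β → β → ℝ) (C : α → β → ℝ) : ℝ :=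
  ∑ x, ∑ x', ∑ y, ∑ y', (ωX x x' - ωY y y')^2 * C x y * C x' y'

/-- The Gromov–Wasserstein distance between finite measure networks
`(α, ωX, μX)` and `(β, ωY, μY)`. -/
noncomputable def GW {α β : Type*} [Fintype α] [Fintype β]
    (ωX : α → α → ℝ) (μX : α → ℝ) (ωY : β → β → ℝ) (μY : β → ℝ) : ℝ :=
  (1/2) * sInf {r | ∃ C, IsCoupling μX μY C ∧ r = Real.sqrt (disSq ωX ωY C)}

/-! The coupling of `γ(s)` with `γ(t)` along the diagonal, and those of `X` with `γ(s)` and of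
`γ(t)` with `Y` along the projections, have distortions `|t - s|`, `s` and `1 - t` times `dis(μ)`.
This gives `d(γ(s), γ(t)) ≤ |t - s| d(X, Y)`, `d(X, γ(s)) ≤ s d(X, Y)` and
`d(γ(t), Y) ≤ (1 - t) d(X, Y)`. The triangle inequality for `d`, obtained by gluing couplings
along a common marginal and Minkowski's inequality, applied along `X, γ(s), γ(t), Y`, turns the
first bound into an equality. -/

lemma Real.sqrt_sum_add_sq_mul_le {ι : Type*} [Fintype ι] (u v m : ι → ℝ) (hm : ∀ i, 0 ≤ m i) :
    √(∑ i, (u i + v i) ^ 2 * m i) ≤ √(∑ i, u i ^ 2 * m i) + √(∑ i, v i ^ 2 * m i) := by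
  have weighted_norm (w : ι → ℝ) :
      √(∑ i, w i ^ 2 * m i) = ‖WithLp.toLp 2 (fun i => w i * √(m i))‖ := by
    rw [EuclideanSpace.norm_eq]
    simp [mul_pow, Real.sq_sqrt (hm _)]
  have hsum : (fun i => (u i + v i) * √(m i))
      = (fun i => u i * √(m i)) + fun i => v i * √(m i) := by
    ext i
    simp [add_mul]
  rw [weighted_norm, weighted_norm, weighted_norm, hsum, WithLp.toLp_add]
  exact norm_add_le _ _

lemma Finset.sum_comp_mul_eq_sum_mul_sum_fiber {T P : Type*} [Fintype T] [Fintype P]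
    [DecidableEq P] (π : T → P) (h : P → ℝ) (g : T → ℝ) :
    ∑ t, h (π t) * g t = ∑ p, h p * ∑ t with π t = p, g t := by
  simp_rw [mul_sum]
  rw [← sum_fiberwise univ π]
  exact sum_congr rfl fun p _ => sum_congr rfl fun t ht => by rw [(mem_filter.1 ht).2]

lemma Finset.sum_sum_comp_mul_mul_eq {T P : Type*} [Fintype T] [Fintype P] [DecidableEq P]
    (π : T → P) (g : T → ℝ) (F : P → P → ℝ) :
    ∑ t, ∑ t', F (π t) (π t') * g t * g t'
      = ∑ p, ∑ q, F p q * (∑ t with π t = p, g t) * (∑ t with π t = q, g t) := by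
  have inner (p : P) : ∑ t', F p (π t') * g t' = ∑ q, F p q * ∑ t with π t = q, g t :=
    sum_comp_mul_eq_sum_mul_sum_fiber π (F p) g
  calc ∑ t, ∑ t', F (π t) (π t') * g t * g t'
      = ∑ t, (∑ q, F (π t) q * ∑ t' with π t' = q, g t') * g t := by
        simp_rw [← inner, sum_mul]
        exact sum_congr rfl fun _ _ => sum_congr rfl fun _ _ => by ring
    _ = _ := by
        rw [sum_comp_mul_eq_sum_mul_sum_fiber π fun p => ∑ q, F p q * ∑ t' with π t' = q, g t']
        simp_rw [sum_mul]
        exact sum_congr rfl fun _ _ => sum_congr rfl fun _ _ => by ring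

section Coupling

variable {α β : Type*} [Fintype α] [Fintype β]

lemma IsCoupling.transpose {μX : α → ℝ} {μY : β → ℝ}
    {C : α → β → ℝ} (hC : IsCoupling μX μY C) : IsCoupling μY μX fun y x => C x y :=
  ⟨fun y x => hC.1 x y, hC.2.2, hC.2.1⟩

lemma IsCoupling.eq_zero_of_right_eq_zero {μX : α → ℝ} {μY : β → ℝ}
    {C : α → β → ℝ} (hC : IsCoupling μX μY C) {y : β} (hy : μY y = 0) (x : α) : C x y = 0 :=
  (sum_eq_zero_iff_of_nonneg fun x' _ => hC.1 x' y).1 (by rw [hC.2.2, hy]) x (mem_univ x)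

lemma IsCoupling.right_nonneg {μX : α → ℝ} {μY : β → ℝ}
    {C : α → β → ℝ} (hC : IsCoupling μX μY C) (y : β) : 0 ≤ μY y :=
  hC.2.2 y ▸ sum_nonneg fun x _ => hC.1 x y

lemma disSq_eq_sum_prod (ωX : α → α → ℝ) (ωY : β → β → ℝ) (C : α → β → ℝ) :
    disSq ωX ωY C
      = ∑ p : α × β, ∑ q : α × β, (ωX p.1 q.1 - ωY p.2 q.2) ^ 2 * C p.1 p.2 * C q.1 q.2 := by
  simp only [disSq, Fintype.sum_prod_type]
  exact sum_congr rfl fun _ _ => sum_comm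

lemma disSq_transpose (ωX : α → α → ℝ) (ωY : β → β → ℝ) (C : α → β → ℝ) :
    disSq ωY ωX (fun y x => C x y) = disSq ωX ωY C := by
  rw [disSq_eq_sum_prod, disSq_eq_sum_prod]
  refine Fintype.sum_equiv (Equiv.prodComm β α) _ _ fun p =>
    Fintype.sum_equiv (Equiv.prodComm β α) _ _ fun q => ?_
  simp only [Equiv.prodComm_apply, Prod.fst_swap, Prod.snd_swap]
  ring

end Coupling

def pushCoupling {α β T : Type*} [Fintype T] [DecidableEq α] [DecidableEq β] (a : T → α)
    (b : T → β) (g : T → ℝ) (x : α) (y : β) : ℝ :=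
  ∑ t with a t = x ∧ b t = y, g t

section Push

variable {α β T : Type*} [Fintype T] [DecidableEq α] [DecidableEq β]

lemma sum_pushCoupling_right [Fintype β] (a : T → α) (b : T → β) (g : T → ℝ) (x : α) :
    ∑ y, pushCoupling a b g x y = ∑ t with a t = x, g t := by
  simp only [pushCoupling, ← filter_filter]
  exact sum_fiberwise _ _ _

lemma sum_pushCoupling_left [Fintype α] (a : T → α) (b : T → β) (g : T → ℝ) (y : β) :
    ∑ x, pushCoupling a b g x y = ∑ t with b t = y, g t := by
  simp only [pushCoupling, and_comm (a := a _ = _), ← filter_filter]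
  exact sum_fiberwise _ _ _

lemma isCoupling_pushCoupling [Fintype α] [Fintype β] {a : T → α} {b : T → β} {g : T → ℝ}
    {μX : α → ℝ} {μY : β → ℝ} (hg : ∀ t, 0 ≤ g t) (ha : ∀ x, ∑ t with a t = x, g t = μX x)
    (hb : ∀ y, ∑ t with b t = y, g t = μY y) :
    IsCoupling μX μY (pushCoupling a b g) :=
  ⟨fun _ _ => sum_nonneg fun t _ => hg t,
    fun x => (sum_pushCoupling_right a b g x).trans (ha x),
    fun y => (sum_pushCoupling_left a b g y).trans (hb y)⟩

lemma disSq_pushCoupling [Fintype α] [Fintype β] (ωX : α → α → ℝ) (ωY : β → β → ℝ)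
    (a : T → α) (b : T → β) (g : T → ℝ) :
    disSq ωX ωY (pushCoupling a b g)
      = ∑ t, ∑ t', (ωX (a t) (a t') - ωY (b t) (b t')) ^ 2 * g t * g t' := by
  rw [disSq_eq_sum_prod, sum_sum_comp_mul_mul_eq (fun t => (a t, b t)) g
    fun p q => (ωX p.1 q.1 - ωY p.2 q.2) ^ 2]
  simp only [pushCoupling, Prod.ext_iff]

end Push

/-- Where `μW w = 0` the division by zero gives `0`, which is then also the value of `C₁ x w`
and of `C₂ w z`. -/
noncomputable def glue {α β γ : Type*} (μW : β → ℝ) (C₁ : α → β → ℝ) (C₂ : β → γ → ℝ)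
    (t : α × β × γ) : ℝ :=
  C₁ t.1 t.2.1 * C₂ t.2.1 t.2.2 / μW t.2.1

section Glue

variable {α β γ : Type*} [Fintype α] [Fintype β] [Fintype γ] {μX : α → ℝ} {μW : β → ℝ}
  {μZ : γ → ℝ} {C₁ : α → β → ℝ} {C₂ : β → γ → ℝ}

lemma glue_nonneg (h₁ : IsCoupling μX μW C₁) (h₂ : IsCoupling μW μZ C₂) (t : α × β × γ) :
    0 ≤ glue μW C₁ C₂ t :=
  div_nonneg (mul_nonneg (h₁.1 _ _) (h₂.1 _ _)) (h₁.right_nonneg _)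

lemma pushCoupling_glue_left [DecidableEq α] [DecidableEq β]
    (h₁ : IsCoupling μX μW C₁) (h₂ : IsCoupling μW μZ C₂) :
    pushCoupling (·.1) (·.2.1) (glue μW C₁ C₂) = C₁ := by
  ext x w
  have fiber : pushCoupling (·.1) (·.2.1) (glue μW C₁ C₂) x w
      = ∑ z, glue μW C₁ C₂ (x, w, z) := by
    rw [pushCoupling, sum_filter, Fintype.sum_prod_type, sum_eq_single x,
      Fintype.sum_prod_type, sum_eq_single w] <;> simp_all
  rw [fiber]
  simp only [glue, ← sum_div, ← mul_sum, h₂.2.1]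
  rcases eq_or_ne (μW w) 0 with hw | hw
  · simp [h₁.eq_zero_of_right_eq_zero hw]
  · exact mul_div_cancel_right₀ _ hw

lemma pushCoupling_glue_right [DecidableEq β] [DecidableEq γ]
    (h₁ : IsCoupling μX μW C₁) (h₂ : IsCoupling μW μZ C₂) :
    pushCoupling (·.2.1) (·.2.2) (glue μW C₁ C₂) = C₂ := by
  ext w z
  have fiber : pushCoupling (·.2.1) (·.2.2) (glue μW C₁ C₂) w z
      = ∑ x, glue μW C₁ C₂ (x, w, z) := by
    simp [pushCoupling, sum_filter, Fintype.sum_prod_type, ite_and]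
  rw [fiber]
  simp only [glue, ← sum_div, ← sum_mul, h₁.2.2]
  rcases eq_or_ne (μW w) 0 with hw | hw
  · simp [h₂.transpose.eq_zero_of_right_eq_zero hw]
  · exact mul_div_cancel_left₀ _ hw

lemma exists_isCoupling_sqrt_disSq_le_add [DecidableEq α] [DecidableEq β] [DecidableEq γ]
    (ωX : α → α → ℝ) (ωW : β → β → ℝ) (ωZ : γ → γ → ℝ) (h₁ : IsCoupling μX μW C₁)
    (h₂ : IsCoupling μW μZ C₂) :
    ∃ C, IsCoupling μX μZ C ∧
      √(disSq ωX ωZ C) ≤ √(disSq ωX ωW C₁) + √(disSq ωW ωZ C₂) := by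
  have hC : IsCoupling μX μZ (pushCoupling (·.1) (·.2.2) (glue μW C₁ C₂)) := by
    refine isCoupling_pushCoupling (glue_nonneg h₁ h₂) (fun x => ?_) (fun z => ?_)
    · rw [← sum_pushCoupling_right _ (·.2.1), pushCoupling_glue_left h₁ h₂, h₁.2.1]
    · rw [← sum_pushCoupling_left (·.2.1), pushCoupling_glue_right h₁ h₂, h₂.2.2]
  refine ⟨_, hC, ?_⟩
  have dis₁ := disSq_pushCoupling ωX ωW (·.1) (·.2.1) (glue μW C₁ C₂)
  have dis₂ := disSq_pushCoupling ωW ωZ (·.2.1) (·.2.2) (glue μW C₁ C₂)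
  rw [pushCoupling_glue_left h₁ h₂] at dis₁
  rw [pushCoupling_glue_right h₁ h₂] at dis₂
  rw [disSq_pushCoupling, dis₁, dis₂]
  simp only [← Fintype.sum_prod_type', mul_assoc]
  convert Real.sqrt_sum_add_sq_mul_le
    (fun r : (α × β × γ) × (α × β × γ) => ωX r.1.1 r.2.1 - ωW r.1.2.1 r.2.2.1)
    (fun r => ωW r.1.2.1 r.2.2.1 - ωZ r.1.2.2 r.2.2.2) _
    (fun r => mul_nonneg (glue_nonneg h₁ h₂ r.1) (glue_nonneg h₁ h₂ r.2)) using 4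
  rw [sub_add_sub_cancel]

end Glue

section GW

variable {α β γ : Type*} [Fintype α] [Fintype β] [Fintype γ]

lemma GW_le_of_isCoupling (ωX : α → α → ℝ) (ωY : β → β → ℝ) {μX : α → ℝ} {μY : β → ℝ}
    {C : α → β → ℝ} (hC : IsCoupling μX μY C) :
    GW ωX μX ωY μY ≤ 1 / 2 * √(disSq ωX ωY C) :=
  mul_le_mul_of_nonneg_left
    (csInf_le ⟨0, by rintro _ ⟨_, _, rfl⟩; positivity⟩ ⟨C, hC, rfl⟩) (by norm_num)

lemma le_GW_of_forall {ωX : α → α → ℝ} {ωY : β → β → ℝ} {μX : α → ℝ} {μY : β → ℝ} {d : ℝ}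
    (hne : ∃ C, IsCoupling μX μY C) (h : ∀ C, IsCoupling μX μY C → d ≤ 1 / 2 * √(disSq ωX ωY C)) :
    d ≤ GW ωX μX ωY μY := by
  obtain ⟨C, hC⟩ := hne
  have : 2 * d ≤ sInf {r | ∃ C, IsCoupling μX μY C ∧ r = √(disSq ωX ωY C)} :=
    le_csInf ⟨_, C, hC, rfl⟩ fun _ ⟨C', hC', hr⟩ => by linarith [h C' hC']
  unfold GW
  linarith

lemma GW_comm (ωX : α → α → ℝ) (μX : α → ℝ) (ωY : β → β → ℝ) (μY : β → ℝ) :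
    GW ωX μX ωY μY = GW ωY μY ωX μX := by
  unfold GW
  congr 2
  ext r
  constructor <;> rintro ⟨C, hC, rfl⟩
  · exact ⟨_, hC.transpose, by rw [disSq_transpose]⟩
  · exact ⟨_, hC.transpose, by rw [disSq_transpose]⟩

theorem GW_triangle (ωX : α → α → ℝ) (μX : α → ℝ) (ωW : β → β → ℝ) (μW : β → ℝ)
    (ωZ : γ → γ → ℝ) (μZ : γ → ℝ) (hXW : ∃ C, IsCoupling μX μW C)
    (hWZ : ∃ C, IsCoupling μW μZ C) :
    GW ωX μX ωZ μZ ≤ GW ωX μX ωW μW + GW ωW μW ωZ μZ := by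
  classical
  rw [← sub_le_iff_le_add]
  refine le_GW_of_forall hXW fun C₁ h₁ => ?_
  rw [sub_le_comm]
  refine le_GW_of_forall hWZ fun C₂ h₂ => ?_
  obtain ⟨C, hC, hle⟩ := exists_isCoupling_sqrt_disSq_le_add ωX ωW ωZ h₁ h₂
  linarith [GW_le_of_isCoupling ωX ωZ hC]

end GW

def interpWeight {α β : Type*} (ωX : α → α → ℝ) (ωY : β → β → ℝ) (t : ℝ) (p q : α × β) : ℝ :=
  (1 - t) * ωX p.1 q.1 + t * ωY p.2 q.2

section Geodesic

variable {α β : Type*} [Fintype α] [Fintype β] {ωX : α → α → ℝ} {μX : α → ℝ}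
  {ωY : β → β → ℝ} {μY : β → ℝ} {μ : α → β → ℝ}

lemma GW_le_abs_mul_of_pushCoupling {A B : Type*} [Fintype A] [Fintype B] [DecidableEq A]
    [DecidableEq B] {ωA : A → A → ℝ} {νA : A → ℝ} {ωB : B → B → ℝ} {νB : B → ℝ}
    {a : α × β → A} {b : α × β → B}
    (hC : IsCoupling νA νB (pushCoupling a b fun p => μ p.1 p.2)) (c : ℝ)
    (hc : ∀ p q, ωA (a p) (a q) - ωB (b p) (b q) = c * (ωX p.1 q.1 - ωY p.2 q.2)) :
    GW ωA νA ωB νB ≤ |c| * (1 / 2 * √(disSq ωX ωY μ)) := by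
  have hdis : disSq ωA ωB (pushCoupling a b fun p => μ p.1 p.2) = c ^ 2 * disSq ωX ωY μ := by
    rw [disSq_pushCoupling, disSq_eq_sum_prod, mul_sum]
    refine sum_congr rfl fun p _ => ?_
    rw [mul_sum]
    refine sum_congr rfl fun q _ => ?_
    rw [hc]
    ring
  calc GW ωA νA ωB νB ≤ 1 / 2 * √(disSq ωA ωB (pushCoupling a b fun p => μ p.1 p.2)) :=
        GW_le_of_isCoupling ωA ωB hC
    _ = |c| * (1 / 2 * √(disSq ωX ωY μ)) := by
        rw [hdis, Real.sqrt_mul (sq_nonneg c), Real.sqrt_sq_eq_abs]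
        ring

variable [DecidableEq α] [DecidableEq β]

lemma IsCoupling.isCoupling_pushCoupling_fst_id (hμ : IsCoupling μX μY μ) :
    IsCoupling μX (fun p => μ p.1 p.2) (pushCoupling Prod.fst id fun p => μ p.1 p.2) :=
  isCoupling_pushCoupling (fun p => hμ.1 p.1 p.2)
    (fun x => by simp [sum_filter, Fintype.sum_prod_type, hμ.2.1]) (fun q => by simp [sum_filter])

lemma IsCoupling.isCoupling_pushCoupling_id_snd (hμ : IsCoupling μX μY μ) :
    IsCoupling (fun p => μ p.1 p.2) μY (pushCoupling id Prod.snd fun p => μ p.1 p.2) :=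
  isCoupling_pushCoupling (fun p => hμ.1 p.1 p.2) (fun q => by simp [sum_filter])
    (fun y => by simp [sum_filter, Fintype.sum_prod_type, hμ.2.2])

lemma IsCoupling.isCoupling_pushCoupling_id_id (hμ : IsCoupling μX μY μ) :
    IsCoupling (fun p : α × β => μ p.1 p.2) (fun p => μ p.1 p.2)
      (pushCoupling id id fun p => μ p.1 p.2) :=
  isCoupling_pushCoupling (fun p => hμ.1 p.1 p.2) (fun q => by simp [sum_filter])
    (fun q => by simp [sum_filter])

lemma GW_interpWeight_le (hμ : IsCoupling μX μY μ) (s t : ℝ) :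
    GW (interpWeight ωX ωY s) (fun p => μ p.1 p.2) (interpWeight ωX ωY t) (fun p => μ p.1 p.2)
      ≤ |t - s| * (1 / 2 * √(disSq ωX ωY μ)) :=
  GW_le_abs_mul_of_pushCoupling hμ.isCoupling_pushCoupling_id_id (t - s) fun p q => by
    simp only [interpWeight, id]
    ring

lemma GW_left_interpWeight_le (hμ : IsCoupling μX μY μ) (s : ℝ) :
    GW ωX μX (interpWeight ωX ωY s) (fun p => μ p.1 p.2) ≤ |s| * (1 / 2 * √(disSq ωX ωY μ)) :=
  GW_le_abs_mul_of_pushCoupling hμ.isCoupling_pushCoupling_fst_id s fun p q => by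
    simp only [interpWeight, id]
    ring

lemma GW_interpWeight_right_le (hμ : IsCoupling μX μY μ) (t : ℝ) :
    GW (interpWeight ωX ωY t) (fun p => μ p.1 p.2) ωY μY
      ≤ |1 - t| * (1 / 2 * √(disSq ωX ωY μ)) :=
  GW_le_abs_mul_of_pushCoupling hμ.isCoupling_pushCoupling_id_snd (1 - t) fun p q => by
    simp only [interpWeight, id]
    ring

lemma sub_mul_le_GW_interpWeight (hμ : IsCoupling μX μY μ)
    (hopt : GW ωX μX ωY μY = 1 / 2 * √(disSq ωX ωY μ)) {s t : ℝ} (hs : 0 ≤ s) (ht : t ≤ 1) :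
    (t - s) * (1 / 2 * √(disSq ωX ωY μ))
      ≤ GW (interpWeight ωX ωY s) (fun p => μ p.1 p.2) (interpWeight ωX ωY t)
          (fun p => μ p.1 p.2) := by
  have hXY := GW_triangle ωX μX (interpWeight ωX ωY s) (fun p => μ p.1 p.2) ωY μY
    ⟨_, hμ.isCoupling_pushCoupling_fst_id⟩ ⟨_, hμ.isCoupling_pushCoupling_id_snd⟩
  have hsY := GW_triangle (interpWeight ωX ωY s) (fun p => μ p.1 p.2) (interpWeight ωX ωY t)
    (fun p => μ p.1 p.2) ωY μY ⟨_, hμ.isCoupling_pushCoupling_id_id⟩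
    ⟨_, hμ.isCoupling_pushCoupling_id_snd⟩
  have hXs := GW_left_interpWeight_le (ωX := ωX) (ωY := ωY) hμ s
  have htY := GW_interpWeight_right_le (ωX := ωX) (ωY := ωY) hμ t
  rw [abs_of_nonneg hs] at hXs
  rw [abs_of_nonneg (sub_nonneg.2 ht)] at htY
  linarith

end Geodesic

theorem gw_geodesic_general {α β : Type*} [Fintype α] [Fintype β]
    (ωX : α → α → ℝ) (μX : α → ℝ) (ωY : β → β → ℝ) (μY : β → ℝ)
    (μ : α → β → ℝ) (hμ : IsCoupling μX μY μ)
    (hopt : GW ωX μX ωY μY = (1/2) * Real.sqrt (disSq ωX ωY μ)) :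
    ∀ s t : ℝ, s ∈ Set.Icc (0:ℝ) 1 → t ∈ Set.Icc (0:ℝ) 1 →
      GW (fun p q : α × β => (1 - s) * ωX p.1 q.1 + s * ωY p.2 q.2)
          (fun p : α × β => μ p.1 p.2)
          (fun p q : α × β => (1 - t) * ωX p.1 q.1 + t * ωY p.2 q.2)
          (fun p : α × β => μ p.1 p.2)
        = |t - s| * GW ωX μX ωY μY := by
  classical
  intro s t hs ht
  rw [hopt]
  refine le_antisymm (GW_interpWeight_le hμ s t) ?_
  rcases le_total s t with hst | hts
  · rw [abs_of_nonneg (sub_nonneg.2 hst)]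
    exact sub_mul_le_GW_interpWeight hμ hopt hs.1 ht.2
  · rw [GW_comm, abs_sub_comm, abs_of_nonneg (sub_nonneg.2 hts)]
    exact sub_mul_le_GW_interpWeight hμ hopt ht.1 hs.2

/-- If `μ` is an optimal coupling between finite measure networks
`(α, ωX, μX)` and `(β, ωY, μY)`, then the path
`γ(t) = (α × β, Ω_t, μ)` with `Ω_t((x,y),(x',y')) = (1−t) ωX(x,x') + t ωY(y,y')`
satisfies `d(γ(s), γ(t)) = |t − s| · d(X,Y)` for all `s, t ∈ [0,1]`: it is a geodesic. -/
theorem gw_geodesic {α β : Type*} [Fintype α] [Fintype β]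
    (ωX : α → α → ℝ) (μX : α → ℝ) (ωY : β → β → ℝ) (μY : β → ℝ)
    (hμX0 : ∀ x, 0 < μX x) (hμX1 : ∑ x, μX x = 1)
    (hμY0 : ∀ y, 0 < μY y) (hμY1 : ∑ y, μY y = 1)
    (μ : α → β → ℝ) (hμ : IsCoupling μX μY μ)
    (hopt : GW ωX μX ωY μY = (1/2) * Real.sqrt (disSq ωX ωY μ)) :
    ∀ s t : ℝ, s ∈ Set.Icc (0:ℝ) 1 → t ∈ Set.Icc (0:ℝ) 1 →
      GW (fun p q : α × β => (1 - s) * ωX p.1 q.1 + s * ωY p.2 q.2)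
          (fun p : α × β => μ p.1 p.2)
          (fun p q : α × β => (1 - t) * ωX p.1 q.1 + t * ωY p.2 q.2)
          (fun p : α × β => μ p.1 p.2)
        = |t - s| * GW ωX μX ωY μY :=
  gw_geodesic_general ωX μX ωY μY μ hμ hopt
end

section
/- Let (Z, ω_Z, μ_Z) be a finite measure network and f : Z × Z → ℝ. Let Z₁ = (Z, ω_Z + f, μ_Z), let Δ be the diagonal coupling, and let μ be any coupling of μ_Z with itself. If for all quadruples z₁,z₂,z₃,z₄ either ω_Z(z₁,z₂) = ω_Z(z₃,z₄) or |ω_Z(z₁,z₂) − ω_Z(z₃,z₄)| ≥ 2 sup_{z,z'} |f(z,z')|, then dis(Δ) ≤ dis(μ), where the distortion is computed between Z and Z₁. Hence the diagonal coupling is optimal between Z and Z₁. -/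
open Finset

/-! Under the gap condition, `(ωZ z₁ z₂ + f z₁ z₂ - ωZ z₃ z₄)² ≥ f(z₁, z₂)²` for every quadruple:
either the two `ωZ` values agree, or they differ by at least `2 |f z₁ z₂|`, and a perturbation of
size `|f|` cannot bring a value within less than `|f|` of the other. Integrating this pointwise
bound against `μ ⊗ μ` and using that `μ` has marginal `μZ` gives `dis(Δ)² ≤ dis(μ)²`. -/

theorem sq_le_add_sq_of_eq_zero_or_two_mul_abs_le {c d : ℝ} (h : d = 0 ∨ 2 * |c| ≤ |d|) :
    c ^ 2 ≤ (d + c) ^ 2 := by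
  rcases h with rfl | h
  · simp
  · nlinarith [abs_mul_abs_self d, abs_mul d c, neg_abs_le (d * c), abs_nonneg c]

theorem mul_mul_eq_sum_sum_mul_mul {ι : Type*} [Fintype ι] (c : ℝ) (μ : ι → ι → ℝ)
    (x y : ι) : c * (∑ z, μ x z) * (∑ z, μ y z) = ∑ z, ∑ z', c * μ x z * μ y z' := by
  simp only [mul_sum, sum_mul]
  exact sum_comm

theorem diagonal_coupling_optimal_general {Z : Type*} [Fintype Z]
    (ωZ : Z → Z → ℝ) (μZ : Z → ℝ)
    (f : Z → Z → ℝ)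
    (μ : Z → Z → ℝ)
    (hμpos : ∀ z z', 0 ≤ μ z z')
    (hrow : ∀ z, ∑ z', μ z z' = μZ z)
    (hgap : ∀ z₁ z₂ z₃ z₄, ωZ z₁ z₂ = ωZ z₃ z₄ ∨
      ∀ z z', 2 * |f z z'| ≤ |ωZ z₁ z₂ - ωZ z₃ z₄|) :
    Real.sqrt (∑ z, ∑ z', (f z z')^2 * μZ z * μZ z')
      ≤ Real.sqrt (∑ z₁, ∑ z₂, ∑ z₃, ∑ z₄,
          (ωZ z₁ z₂ + f z₁ z₂ - ωZ z₃ z₄)^2 * μ z₁ z₃ * μ z₂ z₄) := by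
  have pointwise : ∀ z₁ z₂ z₃ z₄, f z₁ z₂ ^ 2 ≤ (ωZ z₁ z₂ + f z₁ z₂ - ωZ z₃ z₄) ^ 2 := by
    intro z₁ z₂ z₃ z₄
    rw [add_sub_right_comm]
    refine sq_le_add_sq_of_eq_zero_or_two_mul_abs_le ?_
    exact (hgap z₁ z₂ z₃ z₄).imp sub_eq_zero_of_eq (fun h => h z₁ z₂)
  refine Real.sqrt_le_sqrt (sum_le_sum fun z₁ _ => sum_le_sum fun z₂ _ => ?_)
  calc f z₁ z₂ ^ 2 * μZ z₁ * μZ z₂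
      = ∑ z₃, ∑ z₄, f z₁ z₂ ^ 2 * μ z₁ z₃ * μ z₂ z₄ := by
        rw [← hrow z₁, ← hrow z₂, mul_mul_eq_sum_sum_mul_mul]
    _ ≤ _ := sum_le_sum fun z₃ _ => sum_le_sum fun z₄ _ =>
        mul_le_mul_of_nonneg_right
          (mul_le_mul_of_nonneg_right (pointwise z₁ z₂ z₃ z₄) (hμpos z₁ z₃)) (hμpos z₂ z₄)

/-- Let `(Z, ωZ, μZ)` be a finite measure network, `f : Z × Z → ℝ`, and
`Z₁ = (Z, ωZ + f, μZ)`. If for every quadruple either `ωZ(z₁,z₂) = ωZ(z₃,z₄)` or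
`|ωZ(z₁,z₂) − ωZ(z₃,z₄)| ≥ 2 sup |f|`, then for any coupling `μ` of `μZ` with itself
the distortion of the diagonal coupling `Δ` (between `Z` and `Z₁`) is at most that of `μ`:
`dis(Δ) ≤ dis(μ)`. -/
theorem diagonal_coupling_optimal {Z : Type*} [Fintype Z]
    (ωZ : Z → Z → ℝ) (μZ : Z → ℝ)
    (hμ0 : ∀ z, 0 < μZ z) (hμ1 : ∑ z, μZ z = 1)
    (f : Z → Z → ℝ)
    (μ : Z → Z → ℝ)
    (hμpos : ∀ z z', 0 ≤ μ z z')
    (hrow : ∀ z, ∑ z', μ z z' = μZ z)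
    (hcol : ∀ z', ∑ z, μ z z' = μZ z')
    (hgap : ∀ z₁ z₂ z₃ z₄, ωZ z₁ z₂ = ωZ z₃ z₄ ∨
      ∀ z z', 2 * |f z z'| ≤ |ωZ z₁ z₂ - ωZ z₃ z₄|) :
    Real.sqrt (∑ z, ∑ z', (f z z')^2 * μZ z * μZ z')
      ≤ Real.sqrt (∑ z₁, ∑ z₂, ∑ z₃, ∑ z₄,
          (ωZ z₁ z₂ + f z₁ z₂ - ωZ z₃ z₄)^2 * μ z₁ z₃ * μ z₂ z₄) :=
  diagonal_coupling_optimal_general ωZ μZ f μ hμpos hrow hgap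
end
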